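/- The topological complexity of the finite model 𝕊¹_3 of the circle with 6 points equals 3: TC(𝕊¹_3) = 3. In particular, 𝕊¹_3 × 𝕊¹_3 can be covered by three open sets each admitting a motion planner, but not by two. -/

import Mathlib

open Set

/-- `Q ⊆ X × X` admits a motion planner: a continuous map `s` from `Q` to the path
space `P(X) = C(I, X)` (with the compact-open topology) that is a section of the
endpoint map `π : C(I, X) → X × X`, `γ ↦ (γ 0, γ 1)`. -/
def AdmitsMotionPlanner {X : Type*} [TopologicalSpace X] (Q : Set (X × X)) : Prop :=
  ∃ s : C(Q, C(unitInterval, X)), ∀ q : Q, ((s q) 0, (s q) 1) = (q : X × X)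

/-- `X × X` is covered by `k` open sets, each admitting a motion planner. -/
def TCCover (X : Type*) [TopologicalSpace X] (k : ℕ) : Prop :=
  ∃ Q : Fin k → Set (X × X),
    (∀ i, IsOpen (Q i)) ∧ (⋃ i, Q i) = Set.univ ∧ ∀ i, AdmitsMotionPlanner (Q i)

/-- The (unreduced) topological complexity of `X`: the least `k` such that `X × X`
can be covered by `k` open sets, each admitting a motion planner. -/
noncomputable def topologicalComplexity (X : Type*) [TopologicalSpace X] : ℕ :=
  sInf {k | TCCover X k}
/-- The underlying set of the finite model `𝕊¹_n` of the circle (`2n` points):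
`Sum.inl i` is `x_i` and `Sum.inr i` is `y_i`. -/
def SCirc (n : ℕ) : Type := Fin n ⊕ Fin n

namespace SCirc

/-- The minimal point `x_i` of `𝕊¹_n`. -/
def x {n : ℕ} (i : Fin n) : SCirc n := Sum.inl i

/-- The maximal point `y_i` of `𝕊¹_n`. -/
def y {n : ℕ} (i : Fin n) : SCirc n := Sum.inr i

/-- The partial order on `𝕊¹_n` generated by `x_i < y_i` and `x_{(i-1) mod n} < y_i`. -/
def le {n : ℕ} : SCirc n → SCirc n → Prop
  | Sum.inl i, Sum.inl j => i = j
  | Sum.inr i, Sum.inr j => i = j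
  | Sum.inl i, Sum.inr j => i = j ∨ (i : ℕ) = ((j : ℕ) + n - 1) % n
  | Sum.inr _, Sum.inl _ => False

/-- The Alexandrov topology on `𝕊¹_n`: open sets are down-sets.  The minimal open
neighbourhoods are `x_i^↓ = {x_i}` and `y_i^↓ = {y_i, x_i, x_{(i-1) mod n}}`. -/
instance (n : ℕ) : TopologicalSpace (SCirc n) where
  IsOpen U := ∀ a ∈ U, ∀ b, SCirc.le b a → b ∈ U
  isOpen_univ := fun _ _ _ _ => trivial
  isOpen_inter := fun _ _ hU hV a ha b hba => ⟨hU a ha.1 b hba, hV a ha.2 b hba⟩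
  isOpen_sUnion := fun S hS a ha b hba => by
    obtain ⟨U, hUS, haU⟩ := ha
    exact ⟨U, hUS, hS U hUS a haU b hba⟩

end SCirc

/-!
Upper bound: `{y_k}ᶜ` is the fence `x_k < y_{k+1} > x_{k+1} < y_{k+2} > x_{k+2}`, which contracts
onto `x_k` through a chain of pointwise comparable maps, and pointwise comparable maps are
homotopic. So `{y_k}ᶜ × {y_k}ᶜ` admits a motion planner, and every pair of points avoids some `y_k`.

Lower bound: `Q` admits a motion planner iff the two projections `Q → X` are homotopic. In `𝕊¹_n`,
`n ≥ 2`, every `y` lies above two `x`'s and every `x` below two `y`'s, so a map comparable with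
the identity is the identity; as along a homotopy `H` of a finite space the maps `H_t` near `t₀`
lie below `H_{t₀}`, only the identity is homotopic to the identity. Colour the pairs `(y_i, y_j)`
by membership in the first of two covering open sets: some line of `𝔽₃²` other than the diagonal
is monochromatic, and the self-map of `𝕊¹_3` realizing that line on the maximal points then has its
graph (or transposed graph) in one of the two sets, so it is homotopic to the identity.
-/

open Topology ContinuousMap

section General

variable {X Y : Type*} [TopologicalSpace X] [TopologicalSpace Y]

theorem continuous_of_forall_specializes [AlexandrovDiscrete X] {f : X → Y}
    (hf : ∀ a b, a ⤳ b → f a ⤳ f b) : Continuous f :=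
  continuous_def.2 fun _ hU =>
    isOpen_iff_forall_specializes.2 fun a b hab hb => (hf a b hab).mem_open hU hb

theorem eventually_forall_specializes {T : Type*} [TopologicalSpace T] [Finite X]
    [AlexandrovDiscrete Y] {F : T × X → Y} (hF : Continuous F) (t₀ : T) :
    ∀ᶠ t in 𝓝 t₀, ∀ x, F (t, x) ⤳ F (t₀, x) := by
  refine Filter.eventually_all.2 fun x => ?_
  have hker : nhdsKer {F (t₀, x)} ∈ 𝓝 (F (t₀, x)) :=
    isOpen_nhdsKer.mem_nhds (mem_nhdsKer_singleton.2 specializes_rfl)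
  filter_upwards [(hF.comp (Continuous.prodMk_left x)).continuousAt.preimage_mem_nhds hker]
    with t ht using mem_nhdsKer_singleton.1 ht

theorem ContinuousMap.homotopic_of_forall_specializes {f g : C(X, Y)} (h : ∀ x, f x ⤳ g x) :
    f.Homotopic g := by
  let F : unitInterval × X → Y := fun p => if p.1 < 1 then f p.2 else g p.2
  have hF : Continuous F := by
    refine continuous_iff_continuousAt.2 fun ⟨t, x⟩ => ?_
    by_cases ht : t < 1
    · refine (f.continuous.comp continuous_snd).continuousAt.congr ?_
      filter_upwards [continuous_fst.continuousAt.eventually_lt continuousAt_const ht]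
        with p hp
      simp [F, hp]
    · have hFg : ∀ p, F p ⤳ g p.2 := fun p => by
        by_cases hp : p.1 < 1 <;> simp [F, hp, h p.2, specializes_rfl]
      have hFt : F (t, x) = g x := if_neg ht
      rw [ContinuousAt, hFt]
      exact _root_.Tendsto.specializes ((g.continuous.comp continuous_snd).tendsto (t, x)) hFg
  exact ⟨⟨⟨F, hF⟩, fun _ => if_pos zero_lt_one, fun _ => if_neg (lt_irrefl 1)⟩⟩

theorem admitsMotionPlanner_iff_homotopic {Q : Set (X × X)} :
    AdmitsMotionPlanner Q ↔ (fst.restrict Q).Homotopic (snd.restrict Q) := by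
  constructor
  · rintro ⟨s, hs⟩
    refine ⟨⟨⟨fun p => s p.2 p.1, ?_⟩, fun q => congrArg Prod.fst (hs q),
      fun q => congrArg Prod.snd (hs q)⟩⟩
    exact continuous_eval.comp ((s.continuous.comp continuous_snd).prodMk continuous_fst)
  · rintro ⟨H⟩
    exact ⟨(H.toContinuousMap.comp prodSwap).curry,
      fun q => Prod.ext (H.apply_zero q) (H.apply_one q)⟩

theorem AdmitsMotionPlanner.homotopic {Q : Set (X × X)} (hQ : AdmitsMotionPlanner Q)
    {f g : C(Y, X)} (h : ∀ y, (f y, g y) ∈ Q) : f.Homotopic g :=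
  (admitsMotionPlanner_iff_homotopic.1 hQ).comp
    (.refl (⟨fun y => ⟨(f y, g y), h y⟩, by fun_prop⟩ : C(Y, Q)))

theorem admitsMotionPlanner_prod_self {U : Set X} {x₀ : X}
    (h : ((ContinuousMap.id X).restrict U).Homotopic (.const U x₀)) :
    AdmitsMotionPlanner (U ×ˢ U) := by
  let p₁ : C(U ×ˢ U, U) := ⟨fun q => ⟨q.1.1, q.2.1⟩, by fun_prop⟩
  let p₂ : C(U ×ˢ U, U) := ⟨fun q => ⟨q.1.2, q.2.2⟩, by fun_prop⟩
  exact admitsMotionPlanner_iff_homotopic.2 ((h.comp (.refl p₁)).trans (h.symm.comp (.refl p₂)))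

theorem admitsMotionPlanner_empty : AdmitsMotionPlanner (∅ : Set (X × X)) :=
  ⟨⟨fun q => q.2.elim, continuous_of_discreteTopology⟩, fun q => q.2.elim⟩

theorem TCCover.mono {k m : ℕ} (h : TCCover X k) (hkm : k ≤ m) : TCCover X m := by
  obtain ⟨Q, hQo, hQcov, hQ⟩ := h
  refine ⟨fun i => if hi : (i : ℕ) < k then Q ⟨i, hi⟩ else ∅, fun i => ?_, ?_, fun i => ?_⟩
  · dsimp only
    split_ifs
    exacts [hQo _, isOpen_empty]
  · refine eq_univ_of_forall fun p => ?_
    obtain ⟨i, hi⟩ := mem_iUnion.1 (hQcov ▸ mem_univ p)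
    exact mem_iUnion.2 ⟨Fin.castLE hkm i, by simpa using hi⟩
  · dsimp only
    split_ifs
    exacts [hQ _, admitsMotionPlanner_empty]

theorem topologicalComplexity_eq_of_tcCover {k : ℕ} (h : TCCover X (k + 1))
    (h' : ¬ TCCover X k) : topologicalComplexity X = k + 1 :=
  le_antisymm (Nat.sInf_le h) <| le_csInf ⟨_, h⟩ fun _ hm =>
    Nat.succ_le_of_lt <| lt_of_not_ge fun hmk => h' (TCCover.mono hm hmk)

end General

namespace SCirc

variable {n : ℕ}

instance : Fintype (SCirc n) := inferInstanceAs (Fintype (Fin n ⊕ Fin n))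

instance : DecidableEq (SCirc n) := inferInstanceAs (DecidableEq (Fin n ⊕ Fin n))

instance : DecidableRel (@le n)
  | Sum.inl i, Sum.inl j => inferInstanceAs (Decidable (i = j))
  | Sum.inr i, Sum.inr j => inferInstanceAs (Decidable (i = j))
  | Sum.inl i, Sum.inr j => inferInstanceAs (Decidable (i = j ∨ (i : ℕ) = (j + n - 1) % n))
  | Sum.inr _, Sum.inl _ => inferInstanceAs (Decidable False)

theorem le.refl (a : SCirc n) : le a a := by
  cases a <;> simp [le]

theorem le.trans {a b c : SCirc n} (hab : le a b) (hbc : le b c) : le a c := by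
  cases a <;> cases b <;> cases c <;> simp_all [le]

theorem specializes_iff_le {a b : SCirc n} : a ⤳ b ↔ le a b :=
  ⟨fun h => h.mem_open (s := {c | le c b}) (fun _ hc _ hbc => hbc.trans hc) (le.refl b),
    fun h => specializes_iff_forall_open.2 fun _ hU hb => hU b hb a h⟩

theorem le_x_iff {a : SCirc n} {i : Fin n} : le a (x i) ↔ a = x i := by
  cases a with
  | inl k => exact ⟨congrArg Sum.inl, fun h => Sum.inl_injective h⟩
  | inr k => exact ⟨False.elim, fun h => Sum.inr_ne_inl h⟩

theorem y_le_iff {a : SCirc n} {j : Fin n} : le (y j) a ↔ a = y j := by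
  cases a with
  | inl k => exact ⟨False.elim, fun h => Sum.inl_ne_inr h⟩
  | inr k => exact ⟨fun h => congrArg Sum.inr h.symm, fun h => (Sum.inr_injective h).symm⟩

theorem x_le_y_self (i : Fin n) : le (x i) (y i) := Or.inl rfl

theorem exists_specializes_y (w : SCirc n) : ∃ j, w ⤳ y j := by
  rcases w with i | i
  · exact ⟨i, specializes_iff_le.2 (x_le_y_self i)⟩
  · exact ⟨i, specializes_rfl⟩

theorem exists_ne_x_le_y (hn : 2 ≤ n) (j : Fin n) : ∃ i ≠ j, le (x i) (y j) := by
  refine ⟨⟨(j + n - 1) % n, Nat.mod_lt _ j.pos⟩, fun h => ?_, Or.inr rfl⟩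
  have hj : (j + n - 1) % n = j := congrArg Fin.val h
  rcases Nat.lt_or_ge (j + n - 1) n with hlt | hge
  · rw [Nat.mod_eq_of_lt hlt] at hj; omega
  · rw [show j + n - 1 = j - 1 + n by omega, Nat.add_mod_right,
      Nat.mod_eq_of_lt (by omega)] at hj
    omega

theorem exists_ne_y_ge_x (hn : 2 ≤ n) (i : Fin n) : ∃ j ≠ i, le (x i) (y j) := by
  refine ⟨⟨(i + 1) % n, Nat.mod_lt _ i.pos⟩, fun h => ?_, Or.inr ?_⟩
  · have hi : (i + 1) % n = i := congrArg Fin.val h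
    rcases Nat.lt_or_ge (i + 1) n with hlt | hge
    · rw [Nat.mod_eq_of_lt hlt] at hi; omega
    · rw [show i + 1 = n by omega, Nat.mod_self] at hi; omega
  · show (i : ℕ) = ((i + 1) % n + n - 1) % n
    rcases Nat.lt_or_ge (i + 1) n with hlt | hge
    · rw [Nat.mod_eq_of_lt hlt, show i + 1 + n - 1 = i + n by omega, Nat.add_mod_right,
        Nat.mod_eq_of_lt i.isLt]
    · rw [show i + 1 = n by omega, Nat.mod_self, zero_add, Nat.mod_eq_of_lt (by omega)]
      omega

theorem exists_eq_y_of_x_le {a : SCirc n} {i i' : Fin n} (hii' : i ≠ i') (h : le (x i) a)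
    (h' : le (x i') a) : ∃ k, a = y k := by
  rcases a with k | k
  · exact absurd (Eq.trans (h : i = k) (h' : i' = k).symm) hii'
  · exact ⟨k, rfl⟩

theorem exists_eq_x_of_le_y {a : SCirc n} {j j' : Fin n} (hjj' : j ≠ j') (h : le a (y j))
    (h' : le a (y j')) : ∃ k, a = x k := by
  rcases a with k | k
  · exact ⟨k, rfl⟩
  · exact absurd (Eq.trans (h : k = j).symm (h' : k = j')) hjj'

theorem eq_id_of_forall_apply_specializes (hn : 2 ≤ n) {g : C(SCirc n, SCirc n)}
    (h : ∀ w, g w ⤳ w) : g = .id _ := by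
  have hx : ∀ i, g (x i) = x i := fun i => le_x_iff.1 (specializes_iff_le.1 (h (x i)))
  have hx_le : ∀ i j, le (x i) (y j) → le (x i) (g (y j)) := fun i j hij =>
    hx i ▸ specializes_iff_le.1 ((specializes_iff_le.2 hij).map g.continuous)
  ext (i | j)
  · exact hx i
  · obtain ⟨i, hij, hi⟩ := exists_ne_x_le_y hn j
    obtain ⟨k, hk⟩ := exists_eq_y_of_x_le hij (hx_le i j hi) (hx_le j j (x_le_y_self j))
    have hkj := specializes_iff_le.1 (h (y j))
    rw [hk, y_le_iff] at hkj
    exact hk.trans hkj.symm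

theorem eq_id_of_forall_specializes_apply (hn : 2 ≤ n) {g : C(SCirc n, SCirc n)}
    (h : ∀ w, w ⤳ g w) : g = .id _ := by
  have hy : ∀ j, g (y j) = y j := fun j => y_le_iff.1 (specializes_iff_le.1 (h (y j)))
  have le_y : ∀ i j, le (x i) (y j) → le (g (x i)) (y j) := fun i j hij =>
    hy j ▸ specializes_iff_le.1 ((specializes_iff_le.2 hij).map g.continuous)
  ext (i | j)
  · obtain ⟨j, hji, hj⟩ := exists_ne_y_ge_x hn i
    obtain ⟨k, hk⟩ := exists_eq_x_of_le_y hji (le_y i j hj) (le_y i i (x_le_y_self i))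
    have hik := specializes_iff_le.1 (h (x i))
    rw [hk, le_x_iff] at hik
    exact hk.trans hik.symm
  · exact hy j

theorem eq_id_of_homotopic_id (hn : 2 ≤ n) {f : C(SCirc n, SCirc n)}
    (h : f.Homotopic (.id _)) : f = .id _ := by
  obtain ⟨H⟩ := h
  have hconst : IsLocallyConstant fun t => H.curry t = .id _ := by
    refine (IsLocallyConstant.iff_eventually_eq _).2 fun t₀ => ?_
    filter_upwards [eventually_forall_specializes H.continuous t₀] with t ht
    have ht' : ∀ w, H.curry t w ⤳ H.curry t₀ w := ht
    refine propext ⟨fun htid => ?_, fun ht₀id => ?_⟩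
    · exact eq_id_of_forall_specializes_apply hn fun w => by simpa [htid] using ht' w
    · exact eq_id_of_forall_apply_specializes hn fun w => by simpa [ht₀id] using ht' w
  simpa using hconst.apply_eq_of_preconnectedSpace 0 1

theorem isOpen_compl_singleton_y (j : Fin n) : IsOpen ({y j}ᶜ : Set (SCirc n)) :=
  fun _ ha _ hba hb => ha (y_le_iff.1 (hb ▸ hba))

theorem homotopic_of_forall_y_mem {Q : Set (SCirc n × SCirc n)} (hQ : AdmitsMotionPlanner Q)
    (hQo : IsOpen Q) {f g : C(SCirc n, SCirc n)} (h : ∀ j, (f (y j), g (y j)) ∈ Q) :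
    f.Homotopic g :=
  hQ.homotopic fun w =>
    let ⟨j, hj⟩ := exists_specializes_y w
    ((hj.map f.continuous).prod (hj.map g.continuous)).mem_open hQo (h j)

/-- Folds the fence `{y k}ᶜ` onto `x k` from its far end `x (k + 2)`. -/
def contraction (k : Fin 3) : Fin 5 → SCirc 3 → SCirc 3
  | 0 => id
  | 1 => fun z => if z = x (k + 2) then y (k + 2) else z
  | 2 => fun z => if z = x (k + 2) ∨ z = y (k + 2) then x (k + 1) else z
  | 3 => fun z => if z = x k then x k else y (k + 1)
  | 4 => fun _ => x k

theorem contraction_le_contraction : ∀ (k : Fin 3) (m : Fin 5) (z z' : SCirc 3), z ≠ y k →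
    z' ≠ y k → le z z' → le (contraction k m z) (contraction k m z') := by
  decide

theorem contraction_comparable : ∀ (k : Fin 3) (m : Fin 4),
    (∀ z, z ≠ y k → le (contraction k m.castSucc z) (contraction k m.succ z)) ∨
      (∀ z, z ≠ y k → le (contraction k m.succ z) (contraction k m.castSucc z)) := by
  decide

theorem restrict_id_homotopic_const (k : Fin 3) :
    ((ContinuousMap.id (SCirc 3)).restrict {y k}ᶜ).Homotopic (.const _ (x k)) := by
  let F (m : Fin 5) : C(({y k}ᶜ : Set (SCirc 3)), SCirc 3) :=
    ⟨fun z => contraction k m z, continuous_of_forall_specializes fun z z' h =>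
      specializes_iff_le.2 (contraction_le_contraction k m z z' z.2 z'.2
        (specializes_iff_le.1 ((subtype_specializes_iff z z').1 h)))⟩
  refine Fin.induction (motive := fun m => (F 0).Homotopic (F m)) (.refl _)
    (fun m ih => ih.trans ?_) 4
  rcases contraction_comparable k m with hle | hle
  · exact homotopic_of_forall_specializes fun z => specializes_iff_le.2 (hle z.1 z.2)
  · exact (homotopic_of_forall_specializes fun z => specializes_iff_le.2 (hle z.1 z.2)).symm

theorem tcCover_three : TCCover (SCirc 3) 3 := by
  have hcover : ∀ u v : SCirc 3, ∃ k, u ≠ y k ∧ v ≠ y k := by decide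
  refine ⟨fun k => {y k}ᶜ ×ˢ {y k}ᶜ,
    fun k => (isOpen_compl_singleton_y k).prod (isOpen_compl_singleton_y k),
    eq_univ_of_forall fun p => mem_iUnion.2 (hcover p.1 p.2),
    fun k => admitsMotionPlanner_prod_self (restrict_id_homotopic_const k)⟩

set_option maxRecDepth 4000 in
/-- The lines of `𝔽₃²` other than the diagonal are the graphs of `i ↦ a * i + c` with
`(a, c) ≠ (1, 0)` and their transposes. -/
theorem exists_monochromatic_line : ∀ b : Fin 3 → Fin 3 → Bool, ∃ a c : Fin 3, (a, c) ≠ (1, 0) ∧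
    ∃ β : Bool, (∀ i, b i (a * i + c) = β) ∨ (∀ i, b (a * i + c) i = β) := by
  decide

/-- `x i`, the meet of `y i` and `y (i + 1)`, goes to the meet of their images. -/
def affineMap (a c : Fin 3) : SCirc 3 → SCirc 3
  | Sum.inl i => if a = 0 then y c else if a = 1 then x (i + c) else x (c - i - 1)
  | Sum.inr i => y (a * i + c)

theorem affineMap_le_affineMap :
    ∀ a c : Fin 3, ∀ w w' : SCirc 3, le w w' → le (affineMap a c w) (affineMap a c w') := by
  decide

theorem affineMap_ne_id : ∀ a c : Fin 3, (a, c) ≠ (1, 0) → affineMap a c ≠ id := by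
  decide

theorem continuous_affineMap (a c : Fin 3) : Continuous (affineMap a c) :=
  continuous_of_forall_specializes fun w w' h =>
    specializes_iff_le.2 (affineMap_le_affineMap a c w w' (specializes_iff_le.1 h))

theorem not_tcCover_two : ¬ TCCover (SCirc 3) 2 := by
  rintro ⟨Q, hQo, hQcov, hQ⟩
  classical
  have hmem : ∀ (β : Bool) p, decide (p ∈ Q 0) = β → p ∈ Q (bif β then 0 else 1) := by
    rintro (_ | _) p hp
    · obtain ⟨i, hi⟩ := mem_iUnion.1 (hQcov ▸ mem_univ p)
      fin_cases i
      · exact absurd hi (of_decide_eq_false hp)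
      · exact hi
    · exact of_decide_eq_true hp
  obtain ⟨a, c, hac, β, hline⟩ :=
    exists_monochromatic_line fun i j => decide ((y i, y j) ∈ Q 0)
  let g : C(SCirc 3, SCirc 3) := ⟨affineMap a c, continuous_affineMap a c⟩
  have hg : g.Homotopic (.id _) := by
    rcases hline with hline | hline
    · exact (homotopic_of_forall_y_mem (hQ _) (hQo _) (f := .id _) (g := g)
        fun i => hmem β _ (hline i)).symm
    · exact homotopic_of_forall_y_mem (hQ _) (hQo _) (f := g) (g := .id _)
        fun i => hmem β _ (hline i)
  exact affineMap_ne_id a c hac (congrArg DFunLike.coe (eq_id_of_homotopic_id (by norm_num) hg))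

end SCirc

/-- The topological complexity of the finite model `𝕊¹_3` of the
circle with 6 points equals 3: `TC(𝕊¹_3) = 3`.  In particular, `𝕊¹_3 × 𝕊¹_3` can be
covered by three open sets each admitting a motion planner, but not by two. -/
theorem tc_scirc_three_eq_three :
    topologicalComplexity (SCirc 3) = 3 ∧ TCCover (SCirc 3) 3 ∧ ¬ TCCover (SCirc 3) 2 :=
  ⟨topologicalComplexity_eq_of_tcCover SCirc.tcCover_three SCirc.not_tcCover_two,
    SCirc.tcCover_three, SCirc.not_tcCover_two⟩
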